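/- arXiv:1809.10912 — 5 statements merged into one kernel-verified Lean document; each statement's English description precedes it below -/
import Mathlib

section
/- Let K_n = {k : k < n/2 and k! divides n-k}. If a permutation π of [n] has a cycle of length n-k for some k ∈ K_n, then the order of π equals n-k. -/
/-- The full cycle type of a permutation of `Fin n`: the multiset of all cycle lengths,
including fixed points (cycles of length 1). -/
def fullCycleType {n : ℕ} (π : Equiv.Perm (Fin n)) : Multiset ℕ :=
  π.cycleType + Multiset.replicate (n - π.cycleType.sum) 1

/-- If `k < n/2`, `k!` divides `n - k`, and `π` has a cycle of length `n - k`,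
then the order of `π` is `n - k`. -/
theorem stmt0 (n k : ℕ) (hk : 2 * k < n) (hdvd : Nat.factorial k ∣ n - k)
    (π : Equiv.Perm (Fin n)) (hcycle : (n - k) ∈ fullCycleType π) :
    orderOf π = n - k := by
  have hsum : π.cycleType.sum ≤ n := by
    rw [Equiv.Perm.sum_cycleType]
    simpa using Finset.card_le_univ π.support
  rw [fullCycleType, Multiset.mem_add] at hcycle
  rcases hcycle with hmem | hrep
  · -- main case : n - k ∈ cycleType
    rw [← Equiv.Perm.lcm_cycleType]
    have hce := Multiset.cons_erase hmem
    set rest := π.cycleType.erase (n - k) with hrest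
    have hsum' : (n - k) + rest.sum ≤ n := by
      rw [← Multiset.sum_cons, hce]; exact hsum
    have hrestk : rest.sum ≤ k := by omega
    have hdvdrest : ∀ ℓ ∈ rest, ℓ ∣ n - k := by
      intro ℓ hl
      have h2 : 2 ≤ ℓ :=
        Equiv.Perm.two_le_of_mem_cycleType (Multiset.mem_of_mem_erase hl)
      have hle : ℓ ≤ rest.sum :=
        Multiset.single_le_sum (fun x _ => Nat.zero_le x) ℓ hl
      exact dvd_trans (Nat.dvd_factorial (by omega) (by omega)) hdvd
    have hlcmrest : rest.lcm ∣ n - k := Multiset.lcm_dvd.2 hdvdrest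
    rw [← hce, Multiset.lcm_cons]
    exact Nat.dvd_antisymm (Nat.lcm_dvd dvd_rfl hlcmrest) (Nat.dvd_lcm_left _ _)
  · -- fixed-point case : n - k = 1
    have h1 : n - k = 1 := Multiset.eq_of_mem_replicate hrep
    have hk0 : k = 0 := by omega
    have hn1 : n = 1 := by omega
    subst hk0 hn1
    have : π = 1 := Subsingleton.elim π 1
    simp [this]
end

section
/- For independent uniformly random permutations π, π' of [n], P(ord π = ord π') ≥ |K_n| / n², where K_n = {k < n/2 : k! divides n-k}. -/
open Equiv Finset


def permMulCongr {α β : Type*} (q : α ≃ β) : Equiv.Perm α ≃* Equiv.Perm β :=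
  { Equiv.permCongr q with
    map_mul' := fun f g => by
      ext x
      simp [Equiv.permCongr_apply, Equiv.Perm.mul_apply] }

lemma orderOf_permCongr {α β : Type*} (q : α ≃ β) (f : Equiv.Perm α) :
    orderOf (q.permCongr f) = orderOf f :=
  (permMulCongr q).orderOf_eq f

lemma orderOf_finRotate' {m : ℕ} (hm : 2 ≤ m) : orderOf (finRotate m) = m := by
  obtain ⟨m', rfl⟩ : ∃ m', m = m' + 2 := ⟨m - 2, by omega⟩
  rw [(isCycle_finRotate).orderOf, support_finRotate, Finset.card_univ, Fintype.card_fin]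

lemma orderOf_sumCongr {β γ : Type*} [DecidableEq β] [DecidableEq γ] [Fintype β] [Fintype γ]
    (f : Equiv.Perm β) (g : Equiv.Perm γ) :
    orderOf (Equiv.sumCongr f g) = Nat.lcm (orderOf f) (orderOf g) := by
  have : Equiv.sumCongr f g = Equiv.Perm.sumCongrHom β γ (f, g) := rfl
  rw [this, orderOf_injective _ Equiv.Perm.sumCongrHom_injective, Prod.orderOf]

section Construction

variable {n m k : ℕ} (h : m + k = n) (hm : 2 ≤ m) (ρ : Equiv.Perm (Fin n))

/-- The equivalence `Fin m ⊕ Fin k ≃ Fin n`. -/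
def iot (h : m + k = n) : (Fin m ⊕ Fin k) ≃ Fin n := finSumFinEquiv.trans (finCongr h)

/-- The "cycle set" of the construction. -/
def Cset (h : m + k = n) (ρ : Equiv.Perm (Fin n)) : Finset (Fin n) :=
  Finset.image (fun i : Fin m => ρ (iot h (Sum.inl i))) Finset.univ

lemma injQl : Function.Injective (fun i : Fin m => ρ (iot h (Sum.inl i))) :=
  fun a b hab => Sum.inl_injective ((iot h).injective (ρ.injective hab))

lemma card_Cset : (Cset h ρ).card = m := by
  rw [Cset, Finset.card_image_of_injective _ (injQl h ρ), Finset.card_univ, Fintype.card_fin]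

lemma card_Rset : (Cset h ρ)ᶜ.card = k := by
  rw [Finset.card_compl, card_Cset, Fintype.card_fin]; omega

lemma mem_Rset (j : Fin k) : ρ (iot h (Sum.inr j)) ∈ (Cset h ρ)ᶜ := by
  rw [Finset.mem_compl, Cset, Finset.mem_image]
  rintro ⟨i, -, hi⟩
  exact absurd ((iot h).injective (ρ.injective hi)) (by simp)

/-- The tail permutation. -/
noncomputable def wperm : Equiv.Perm (Fin k) :=
  Equiv.ofBijective
    (fun j => ((Cset h ρ)ᶜ.orderIsoOfFin (card_Rset h ρ)).symm
      ⟨ρ (iot h (Sum.inr j)), mem_Rset h ρ j⟩)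
    (by
      rw [Fintype.bijective_iff_injective_and_card]
      refine ⟨fun a b hab => ?_, rfl⟩
      have := Subtype.ext_iff.1 (((Cset h ρ)ᶜ.orderIsoOfFin (card_Rset h ρ)).symm.injective hab)
      exact Sum.inr_injective ((iot h).injective (ρ.injective this)))

/-- The relabeling equivalence. -/
noncomputable def qequiv : (Fin m ⊕ Fin k) ≃ Fin n :=
  Equiv.ofBijective
    (Sum.elim (fun i => ρ (iot h (Sum.inl i)))
      (fun j => ((Cset h ρ)ᶜ.orderIsoOfFin (card_Rset h ρ) j : Fin n)))
    (by
      rw [Fintype.bijective_iff_injective_and_card]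
      constructor
      · rintro (a | a) (b | b) hab
        · exact congrArg Sum.inl (injQl h ρ hab)
        · exfalso
          simp only [Sum.elim_inl, Sum.elim_inr] at hab
          have h1 : ρ (iot h (Sum.inl a)) ∈ Cset h ρ := by
            rw [Cset]; exact Finset.mem_image_of_mem _ (Finset.mem_univ a)
          rw [hab] at h1
          exact absurd h1 (Finset.mem_compl.1 (((Cset h ρ)ᶜ.orderIsoOfFin (card_Rset h ρ) b).2))
        · exfalso
          simp only [Sum.elim_inl, Sum.elim_inr] at hab
          have h1 : ρ (iot h (Sum.inl b)) ∈ Cset h ρ := by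
            rw [Cset]; exact Finset.mem_image_of_mem _ (Finset.mem_univ b)
          rw [← hab] at h1
          exact absurd h1 (Finset.mem_compl.1 (((Cset h ρ)ᶜ.orderIsoOfFin (card_Rset h ρ) a).2))
        · simp only [Sum.elim_inr] at hab
          exact congrArg Sum.inr
            (((Cset h ρ)ᶜ.orderIsoOfFin (card_Rset h ρ)).injective (Subtype.ext hab))
      · simp [Fintype.card_sum, h])

/-- The permutation with an `m`-cycle built from `ρ`. -/
noncomputable def sigma : Equiv.Perm (Fin n) :=
  (qequiv h ρ).permCongr (Equiv.sumCongr (finRotate m) (wperm h ρ))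


lemma orderOf_sigma (hm : 2 ≤ m) (hkm : Nat.factorial k ∣ m) : orderOf (sigma h ρ) = m := by
  rw [sigma, orderOf_permCongr, orderOf_sumCongr, orderOf_finRotate' hm]
  have hw : orderOf (wperm h ρ) ∣ m := by
    refine dvd_trans (dvd_trans orderOf_dvd_card ?_) hkm
    rw [Fintype.card_perm, Fintype.card_fin]
  exact Nat.dvd_antisymm (Nat.lcm_dvd dvd_rfl hw) (Nat.dvd_lcm_left _ _)

lemma sigma_apply_cycle (i : Fin m) :
    sigma h ρ (ρ (iot h (Sum.inl i))) = ρ (iot h (Sum.inl (finRotate m i))) := by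
  have hq : (qequiv h ρ).symm (ρ (iot h (Sum.inl i))) = Sum.inl i :=
    (Equiv.symm_apply_eq _).2 rfl
  rw [sigma, Equiv.permCongr_apply, hq]
  rfl

lemma sigma_apply_tail (j : Fin k) :
    sigma h ρ (((Cset h ρ)ᶜ.orderIsoOfFin (card_Rset h ρ) j : Fin n)) =
      ρ (iot h (Sum.inr j)) := by
  have hq : (qequiv h ρ).symm (((Cset h ρ)ᶜ.orderIsoOfFin (card_Rset h ρ) j : Fin n)) =
      Sum.inr j := (Equiv.symm_apply_eq _).2 rfl
  rw [sigma, Equiv.permCongr_apply, hq]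
  show (qequiv h ρ) (Sum.inr (wperm h ρ j)) = _
  show (((Cset h ρ)ᶜ.orderIsoOfFin (card_Rset h ρ)) (wperm h ρ j) : Fin n) = _
  rw [wperm]
  simp

lemma sigma_pow (t : ℕ) (ht : t < m) :
    (sigma h ρ ^ t) (ρ (iot h (Sum.inl (⟨0, by omega⟩ : Fin m)))) =
      ρ (iot h (Sum.inl (⟨t, ht⟩ : Fin m))) := by
  induction t with
  | zero => rfl
  | succ t ih =>
      obtain ⟨m', rfl⟩ : ∃ m', m = m' + 1 := ⟨m - 1, by omega⟩
      rw [pow_succ', Equiv.Perm.mul_apply, ih (by omega), sigma_apply_cycle]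
      have hrot : finRotate (m' + 1) ⟨t, by omega⟩ = ⟨t + 1, ht⟩ := by
        rw [finRotate_succ_apply]
        apply Fin.ext
        rw [Fin.val_add_one_of_lt (by simp only [Fin.lt_iff_val_lt_val, Fin.val_last]; omega)]
      rw [hrot]

end Construction

lemma orderEmbOfFin_congr {α : Type*} [LinearOrder α] {s t : Finset α} {k : ℕ}
    (hs : s.card = k) (ht : t.card = k) (hst : s = t) (j : Fin k) :
    s.orderEmbOfFin hs j = t.orderEmbOfFin ht j := by subst hst; rfl

section Inj
variable {n m k : ℕ} (h : m + k = n) (hm : 2 ≤ m)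

lemma sigma_inj (ρ ρ' : Equiv.Perm (Fin n)) (hs : sigma h ρ = sigma h ρ')
    (hx : ρ (iot h (Sum.inl (⟨0, by omega⟩ : Fin m))) =
          ρ' (iot h (Sum.inl (⟨0, by omega⟩ : Fin m)))) : ρ = ρ' := by
  have hcyc : ∀ i : Fin m, ρ (iot h (Sum.inl i)) = ρ' (iot h (Sum.inl i)) := by
    intro i
    rw [← Fin.eta i i.2, ← sigma_pow h hm ρ i.1 i.2, ← sigma_pow h hm ρ' i.1 i.2, hs, hx]
  have hC : Cset h ρ = Cset h ρ' := by
    rw [Cset, Cset]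
    exact Finset.image_congr (fun i _ => hcyc i)
  have htail : ∀ j : Fin k, ρ (iot h (Sum.inr j)) = ρ' (iot h (Sum.inr j)) := by
    intro j
    rw [← sigma_apply_tail h ρ j, ← sigma_apply_tail h ρ' j, hs]
    congr 1
    rw [Finset.coe_orderIsoOfFin_apply, Finset.coe_orderIsoOfFin_apply]
    exact orderEmbOfFin_congr _ _ (by rw [hC]) j
  apply Equiv.ext
  intro x
  have hx : x = iot h ((iot h).symm x) := ((iot h).apply_symm_apply x).symm
  rw [hx]
  rcases (iot h).symm x with i | j
  · exact hcyc i
  · exact htail j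

end Inj

open scoped Classical in
lemma count_order_ge (n k : ℕ) (hk1 : 1 ≤ k) (hk2 : 2 * k < n)
    (hk3 : Nat.factorial k ∣ n - k) :
    Nat.factorial n ≤
      n * (Finset.univ.filter (fun σ : Equiv.Perm (Fin n) => orderOf σ = n - k)).card := by
  set m := n - k with hmdef
  have h : m + k = n := by omega
  have hm : 2 ≤ m := by omega
  have hinj : Set.InjOn
      (fun ρ : Equiv.Perm (Fin n) =>
        (sigma h ρ, ρ (iot h (Sum.inl (⟨0, by omega⟩ : Fin m)))))
      ↑(Finset.univ : Finset (Equiv.Perm (Fin n))) := by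
    intro ρ _ ρ' _ hpair
    have h1 : sigma h ρ = sigma h ρ' := congrArg Prod.fst hpair
    have h2 := congrArg Prod.snd hpair
    exact sigma_inj h hm ρ ρ' h1 h2
  have hmaps : ∀ ρ ∈ (Finset.univ : Finset (Equiv.Perm (Fin n))),
      (sigma h ρ, ρ (iot h (Sum.inl (⟨0, by omega⟩ : Fin m)))) ∈
        (Finset.univ.filter (fun σ : Equiv.Perm (Fin n) => orderOf σ = m)) ×ˢ
          (Finset.univ : Finset (Fin n)) := by
    intro ρ _
    rw [Finset.mem_product, Finset.mem_filter]
    exact ⟨⟨Finset.mem_univ _, orderOf_sigma h ρ hm hk3⟩, Finset.mem_univ _⟩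
  have hcard := Finset.card_le_card_of_injOn _ hmaps hinj
  rw [Finset.card_univ, Fintype.card_perm, Fintype.card_fin, Finset.card_product,
    Finset.card_univ, Fintype.card_fin] at hcard
  exact hcard.trans_eq (mul_comm _ _)

/-- `Kset n` is the set of positive integers `k < n/2` such that `k!` divides `n - k`. -/
def Kset (n : ℕ) : Finset ℕ :=
  (Finset.range n).filter (fun k => 1 ≤ k ∧ 2 * k < n ∧ Nat.factorial k ∣ n - k)

open scoped Classical in
/-- For independent uniformly random permutations `π, π'` of `[n]`,
`P(ord π = ord π') ≥ |K_n| / n²`. -/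
theorem stmt4 (n : ℕ) (hn : 1 ≤ n) :
    ((Kset n).card : ℝ) / (n : ℝ) ^ 2 ≤
      ((Finset.univ.filter (fun p : Equiv.Perm (Fin n) × Equiv.Perm (Fin n) =>
          orderOf p.1 = orderOf p.2)).card : ℝ) / ((Nat.factorial n : ℝ)) ^ 2 := by
  set T := Finset.univ.filter (fun p : Equiv.Perm (Fin n) × Equiv.Perm (Fin n) =>
      orderOf p.1 = orderOf p.2) with hTdef
  set A : ℕ → ℕ := fun d =>
    (Finset.univ.filter (fun σ : Equiv.Perm (Fin n) => orderOf σ = d)).card with hAdef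
  set B : ℕ → Finset (Equiv.Perm (Fin n) × Equiv.Perm (Fin n)) := fun d =>
    Finset.univ.filter (fun p : Equiv.Perm (Fin n) × Equiv.Perm (Fin n) =>
      orderOf p.1 = d ∧ orderOf p.2 = d) with hBdef
  have hmemK : ∀ k ∈ Kset n, 1 ≤ k ∧ 2 * k < n ∧ Nat.factorial k ∣ n - k ∧ k < n := by
    intro k hk
    rw [Kset, Finset.mem_filter, Finset.mem_range] at hk
    exact ⟨hk.2.1, hk.2.2.1, hk.2.2.2, hk.1⟩
  have hcardB : ∀ d, (B d).card = (A d) ^ 2 := by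
    intro d
    show (Finset.univ.filter (fun p : Equiv.Perm (Fin n) × Equiv.Perm (Fin n) =>
        orderOf p.1 = d ∧ orderOf p.2 = d)).card =
      (Finset.univ.filter (fun σ : Equiv.Perm (Fin n) => orderOf σ = d)).card ^ 2
    have hBP : (Finset.univ.filter (fun p : Equiv.Perm (Fin n) × Equiv.Perm (Fin n) =>
        orderOf p.1 = d ∧ orderOf p.2 = d)) =
        (Finset.univ.filter (fun σ : Equiv.Perm (Fin n) => orderOf σ = d)) ×ˢ
          (Finset.univ.filter (fun σ : Equiv.Perm (Fin n) => orderOf σ = d)) := by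
      ext p
      simp [Finset.mem_product, Finset.mem_filter]
    rw [hBP, Finset.card_product, sq]
  have hstep1 : ∑ k ∈ Kset n, (A (n - k)) ^ 2 ≤ T.card := by
    have hdisj : ∀ k ∈ (Kset n : Finset ℕ), ∀ k' ∈ (Kset n : Finset ℕ), k ≠ k' →
        Disjoint (B (n - k)) (B (n - k')) := by
      intro k hk k' hk' hne
      have h1 := hmemK k hk
      have h2 := hmemK k' hk'
      rw [Finset.disjoint_left]
      intro p hp hp'
      rw [hBdef, Finset.mem_filter] at hp hp'
      have : n - k = n - k' := hp.2.1.symm.trans hp'.2.1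
      omega
    have hsub : (Kset n).biUnion (fun k => B (n - k)) ⊆ T := by
      intro p hp
      rw [Finset.mem_biUnion] at hp
      obtain ⟨k, -, hp⟩ := hp
      rw [hBdef, Finset.mem_filter] at hp
      rw [hTdef, Finset.mem_filter]
      exact ⟨hp.1, hp.2.1.trans hp.2.2.symm⟩
    calc ∑ k ∈ Kset n, (A (n - k)) ^ 2 = ∑ k ∈ Kset n, (B (n - k)).card := by
          exact Finset.sum_congr rfl (fun k _ => (hcardB (n - k)).symm)
      _ = ((Kset n).biUnion (fun k => B (n - k))).card := (Finset.card_biUnion hdisj).symm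
      _ ≤ T.card := Finset.card_le_card hsub
  have hstep2 : ∀ k ∈ Kset n, Nat.factorial n ≤ n * A (n - k) := by
    intro k hk
    obtain ⟨h1, h2, h3, -⟩ := hmemK k hk
    exact count_order_ge n k h1 h2 h3
  have hstep3 : (Kset n).card * (Nat.factorial n) ^ 2 ≤ n ^ 2 * T.card := by
    calc (Kset n).card * (Nat.factorial n) ^ 2
        = ∑ _k ∈ Kset n, (Nat.factorial n) ^ 2 := by
          rw [Finset.sum_const, smul_eq_mul]
      _ ≤ ∑ k ∈ Kset n, (n * A (n - k)) ^ 2 :=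
          Finset.sum_le_sum (fun k hk => Nat.pow_le_pow_left (hstep2 k hk) 2)
      _ = n ^ 2 * ∑ k ∈ Kset n, (A (n - k)) ^ 2 := by
          rw [Finset.mul_sum]
          exact Finset.sum_congr rfl (fun k _ => mul_pow n _ 2)
      _ ≤ n ^ 2 * T.card := Nat.mul_le_mul_left _ hstep1
  have hn0 : (0 : ℝ) < (n : ℝ) ^ 2 := by positivity
  have hf0 : (0 : ℝ) < ((Nat.factorial n : ℝ)) ^ 2 := by
    have := Nat.factorial_pos n
    positivity
  rw [div_le_div_iff₀ hn0 hf0]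
  have h' : (Kset n).card * (Nat.factorial n) ^ 2 ≤ T.card * n ^ 2 := by
    calc (Kset n).card * (Nat.factorial n) ^ 2 ≤ n ^ 2 * T.card := hstep3
      _ = T.card * n ^ 2 := Nat.mul_comm _ _
  exact_mod_cast h'
end

section
/- limsup over n of n² · P(ord π = ord π') = ∞, where π, π' are independent uniformly random permutations of [n]. -/
/-!
If `r! ∣ ℓ` and `n = ℓ + r`, every permutation of `[n]` made of an `ℓ`-cycle and an arbitrary
permutation of the remaining `r` points has order `lcm ℓ (ord τ) = ℓ`, and such permutations make
up at least a `1/n` fraction of `S_n`. The tower `r₀ = 0`, `r_{j+1} = r_j + r_j!` satisfies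
`r_i! ∣ r_j - r_i` for `i ≤ j`, so for `n = r_M` and `k ≤ M` the orders `n - r_0, …, n - r_{k-1}`
are distinct and each has probability at least `1/n`; hence `P(ord π = ord π') ≥ k / n²`.
-/

open Equiv Finset Nat

namespace Equiv.Perm

lemma orderOf_sumCongr {α β : Type*} (σ : Perm α) (τ : Perm β) :
    orderOf (sumCongr σ τ) = (orderOf σ).lcm (orderOf τ) := by
  rw [← Prod.orderOf_mk]
  exact orderOf_injective (sumCongrHom α β) sumCongrHom_injective (σ, τ)

lemma orderOf_permCongr {α β : Type*} (e : α ≃ β) (σ : Perm α) :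
    orderOf (e.permCongr σ) = orderOf σ := by
  rw [← permCongrHom_coe, MulEquiv.orderOf_eq]

open Fin.NatCast in
lemma finRotate_pow_apply {ℓ : ℕ} [NeZero ℓ] (k : ℕ) (i : Fin ℓ) :
    (finRotate ℓ ^ k) i = i + k := by
  induction k with
  | zero => simp
  | succ k ih => rw [_root_.pow_succ', mul_apply, ih, finRotate_apply, Nat.cast_succ, add_assoc]

lemma orderOf_finRotate (ℓ : ℕ) [NeZero ℓ] : orderOf (finRotate ℓ) = ℓ := by
  refine Nat.dvd_antisymm (orderOf_dvd_of_pow_eq_one ?_) ?_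
  · ext i
    simp [finRotate_pow_apply]
  · have h : (finRotate ℓ ^ orderOf (finRotate ℓ)) 0 = 0 := by rw [pow_orderOf_eq_one]; rfl
    rwa [finRotate_pow_apply, zero_add, Fin.natCast_eq_zero] at h

lemma card_filter_forall_apply_inl_eq_le {ι κ : Type*} [Fintype ι] [DecidableEq ι] [Fintype κ]
    [DecidableEq κ] :
    #{β : Perm (ι ⊕ κ) | ∀ i, β (Sum.inl i) = Sum.inl i} ≤ (Fintype.card κ)! := by
  calc #{β : Perm (ι ⊕ κ) | ∀ i, β (Sum.inl i) = Sum.inl i}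
      ≤ #(univ.image (sumCongr (1 : Perm ι))) := by
        refine card_le_card fun β hβ => ?_
        simp only [mem_filter, mem_univ, true_and] at hβ
        obtain ⟨⟨σ, τ⟩, rfl⟩ := mem_sumCongrHom_range_of_perm_mapsTo_inl (σ := β)
          (by rintro _ ⟨i, rfl⟩; exact ⟨i, (hβ i).symm⟩)
        have hσ : σ = 1 := Equiv.ext fun i => Sum.inl_injective (hβ i)
        simp [hσ]
    _ ≤ (Fintype.card κ)! := by
        rw [← Fintype.card_perm]; exact card_image_le

lemma apply_inl_eq_pow_apply {X κ : Type*} {ℓ : ℕ} [NeZero ℓ] {α : Fin ℓ ⊕ κ ≃ X} {τ : Perm κ}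
    {π : Perm X} (h : α.permCongr (sumCongr (finRotate ℓ) τ) = π) (i : Fin ℓ) :
    α (.inl i) = (π ^ (i : ℕ)) (α (.inl 0)) := by
  have hpow :
      sumCongr (finRotate ℓ) τ ^ (i : ℕ) = sumCongr (finRotate ℓ ^ (i : ℕ)) (τ ^ (i : ℕ)) :=
    (map_pow (sumCongrHom (Fin ℓ) κ) (finRotate ℓ, τ) i).symm
  rw [← h, ← permCongrHom_coe, ← map_pow, permCongrHom_coe, permCongr_apply, symm_apply_apply,
    hpow, sumCongr_apply, Sum.map_inl, finRotate_pow_apply, zero_add, Fin.cast_val_eq_self]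

section LongCycle

variable {X κ : Type*} [Fintype X] [DecidableEq X] [Fintype κ] [DecidableEq κ] {ℓ : ℕ}

lemma card_filter_permCongr_sumCongr_eq_and_apply_eq_le [NeZero ℓ] (π : Perm X) (x : X) :
    #{p : (Fin ℓ ⊕ κ ≃ X) × Perm κ |
      p.1.permCongr (sumCongr (finRotate ℓ) p.2) = π ∧ p.1 (.inl 0) = x} ≤ (Fintype.card κ)! := by
  set S : Finset _ := {p : (Fin ℓ ⊕ κ ≃ X) × Perm κ |
      p.1.permCongr (sumCongr (finRotate ℓ) p.2) = π ∧ p.1 (.inl 0) = x}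
  -- Two pairs in `S` differ by a permutation fixing each `inl i`, as `α (inl i) = (π ^ i) x`.
  obtain hS | ⟨q, hq⟩ := S.eq_empty_or_nonempty
  · simp [hS]
  have hinl : ∀ p ∈ S, ∀ i, p.1 (.inl i) = (π ^ (i : ℕ)) x := by
    intro p hp i
    obtain ⟨hπ, hx⟩ := (mem_filter.mp hp).2
    rw [apply_inl_eq_pow_apply hπ, hx]
  refine le_trans (card_le_card_of_injOn (fun p => p.1.trans q.1.symm) ?_ ?_)
    card_filter_forall_apply_inl_eq_le
  · intro p hp
    simp only [coe_filter, mem_univ, true_and]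
    intro i
    rw [trans_apply, hinl p hp, ← hinl q hq, symm_apply_apply]
  · intro p hp p' hp' h
    have hα : p.1 = p'.1 := Equiv.ext fun y => q.1.symm.injective (Equiv.congr_fun h y)
    have hsum : sumCongr (finRotate ℓ) p.2 = sumCongr (finRotate ℓ) p'.2 := by
      refine p.1.permCongr.injective ?_
      rw [(mem_filter.mp hp).2.1, hα, (mem_filter.mp hp').2.1]
    have hpair : (finRotate ℓ, p.2) = (finRotate ℓ, p'.2) := sumCongrHom_injective hsum
    exact Prod.ext hα (Prod.mk.inj hpair).2

lemma card_filter_permCongr_sumCongr_eq_le [NeZero ℓ] (π : Perm X) :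
    #{p : (Fin ℓ ⊕ κ ≃ X) × Perm κ | p.1.permCongr (sumCongr (finRotate ℓ) p.2) = π} ≤
      Fintype.card X * (Fintype.card κ)! := by
  rw [mul_comm, ← Finset.card_univ (α := X)]
  refine card_le_mul_card_image_of_maps_to (f := fun p => p.1 (.inl 0))
    (fun _ _ => mem_univ _) _ fun x _ => ?_
  rw [filter_filter]
  exact card_filter_permCongr_sumCongr_eq_and_apply_eq_le π x

end LongCycle

theorem factorial_le_card_mul_card_filter_orderOf_eq {X : Type*} [Fintype X] [DecidableEq X]
    {ℓ r : ℕ} (hℓ : 0 < ℓ) (hdvd : r ! ∣ ℓ) (hX : Fintype.card X = ℓ + r) :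
    (Fintype.card X)! ≤ Fintype.card X * #{π : Perm X | orderOf π = ℓ} := by
  have : NeZero ℓ := ⟨hℓ.ne'⟩
  let F : (Fin ℓ ⊕ Fin r ≃ X) × Perm (Fin r) → Perm X :=
    fun p => p.1.permCongr (sumCongr (finRotate ℓ) p.2)
  have hord (p) : orderOf (F p) = ℓ := by
    have hτ : orderOf p.2 ∣ ℓ :=
      (orderOf_dvd_card.trans (by rw [Fintype.card_perm, Fintype.card_fin])).trans hdvd
    rw [orderOf_permCongr, orderOf_sumCongr, orderOf_finRotate, Nat.lcm_eq_left hτ]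
  have hdom : Fintype.card ((Fin ℓ ⊕ Fin r ≃ X) × Perm (Fin r)) = (Fintype.card X)! * r ! := by
    rw [Fintype.card_prod, Fintype.card_equiv (Fintype.equivOfCardEq (by simp [hX])),
      Fintype.card_perm, Fintype.card_fin, Fintype.card_sum, Fintype.card_fin, Fintype.card_fin, hX]
  have himage : #(univ.image F) ≤ #{π : Perm X | orderOf π = ℓ} :=
    card_le_card fun π hπ => by
      obtain ⟨p, -, rfl⟩ := mem_image.mp hπ
      simp [hord p]
  refine Nat.le_of_mul_le_mul_right (c := r !) ?_ (factorial_pos r)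
  calc (Fintype.card X)! * r ! = #(univ : Finset ((Fin ℓ ⊕ Fin r ≃ X) × Perm (Fin r))) := by
        rw [Finset.card_univ, hdom]
    _ ≤ Fintype.card X * r ! * #(univ.image F) := card_le_mul_card_image _ _ fun π _ => by
        simpa [F] using card_filter_permCongr_sumCongr_eq_le (κ := Fin r) π
    _ ≤ Fintype.card X * #{π : Perm X | orderOf π = ℓ} * r ! := by
        rw [mul_right_comm]; gcongr

end Equiv.Perm

lemma sum_sq_card_fiber_le_card_filter_eq {α β : Type*} [Fintype α] [DecidableEq β]
    (f : α → β) (t : Finset β) :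
    ∑ b ∈ t, #{a | f a = b} ^ 2 ≤ #{p : α × α | f p.1 = f p.2} := by
  calc ∑ b ∈ t, #{a | f a = b} ^ 2
      = ∑ b ∈ t, #{p ∈ {p : α × α | f p.1 = f p.2} | f p.1 = b} := by
        refine sum_congr rfl fun b _ => ?_
        rw [sq, ← card_product]
        congr 1
        ext p
        simp only [mem_product, mem_filter, mem_univ, true_and]
        grind
    _ = #{p ∈ {p : α × α | f p.1 = f p.2} | f p.1 ∈ t} := sum_card_fiberwise_eq_card_filter _ _ _
    _ ≤ #{p : α × α | f p.1 = f p.2} := card_filter_le _ _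

def factorialTower : ℕ → ℕ
  | 0 => 0
  | j + 1 => factorialTower j + (factorialTower j)!

lemma factorialTower_strictMono : StrictMono factorialTower :=
  strictMono_nat_of_lt_succ fun _ => Nat.lt_add_of_pos_right (factorial_pos _)

lemma factorial_factorialTower_dvd_sub {i j : ℕ} (h : i ≤ j) :
    (factorialTower i)! ∣ factorialTower j - factorialTower i := by
  induction j, h using Nat.le_induction with
  | base => simp
  | succ j hij ih =>
    have hle : factorialTower i ≤ factorialTower j := factorialTower_strictMono.monotone hij
    rw [factorialTower, Nat.sub_add_comm hle]
    exact dvd_add ih (factorial_dvd_factorial hle)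

theorem exists_mul_factorial_sq_le (k N : ℕ) : ∃ n ≥ N, k * n ! ^ 2 ≤
    n ^ 2 * #{p : Perm (Fin n) × Perm (Fin n) | orderOf p.1 = orderOf p.2} := by
  set n := factorialTower (k + N)
  refine ⟨n, le_add_self.trans factorialTower_strictMono.le_apply, ?_⟩
  have hlt (j) (hj : j < k) : factorialTower j < n := factorialTower_strictMono (by omega)
  have hcount (j) (hj : j < k) :
      n ! ≤ n * #{π : Perm (Fin n) | orderOf π = n - factorialTower j} := by
    simpa using Perm.factorial_le_card_mul_card_filter_orderOf_eq (X := Fin n)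
      (by have := hlt j hj; omega) (factorial_factorialTower_dvd_sub (by omega))
      (by have := hlt j hj; rw [Fintype.card_fin]; omega)
  calc k * n ! ^ 2 = ∑ j ∈ range k, n ! ^ 2 := by simp
    _ ≤ ∑ j ∈ range k, (n * #{π : Perm (Fin n) | orderOf π = n - factorialTower j}) ^ 2 :=
        sum_le_sum fun j hj => Nat.pow_le_pow_left (hcount j (mem_range.mp hj)) 2
    _ = n ^ 2 * ∑ ℓ ∈ (range k).image (n - factorialTower ·),
          #{π : Perm (Fin n) | orderOf π = ℓ} ^ 2 := by
        rw [sum_image, mul_sum]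
        · simp only [mul_pow]
        · intro i hi j hj h
          have := hlt i (mem_range.mp hi)
          have := hlt j (mem_range.mp hj)
          exact factorialTower_strictMono.injective (by simp only at h; omega)
    _ ≤ n ^ 2 * #{p : Perm (Fin n) × Perm (Fin n) | orderOf p.1 = orderOf p.2} := by
        gcongr
        exact sum_sq_card_fiber_le_card_filter_eq _ _

open scoped Classical in
/-- `limsup_n n² · P(ord π = ord π') = ∞` for independent uniform `π, π' ∈ S_n`:
for every `C` there are arbitrarily large `n` with `n² P(ord π = ord π') > C`. -/
theorem stmt5 :
    ∀ C : ℝ, ∃ᶠ n : ℕ in Filter.atTop,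
      C < (n : ℝ) ^ 2 *
        (((Finset.univ.filter (fun p : Equiv.Perm (Fin n) × Equiv.Perm (Fin n) =>
            orderOf p.1 = orderOf p.2)).card : ℝ) / ((Nat.factorial n : ℝ)) ^ 2) := by
  intro C
  refine Filter.frequently_atTop.mpr fun N => ?_
  obtain ⟨n, hN, hn⟩ := exists_mul_factorial_sq_le (⌈C⌉₊ + 1) N
  refine ⟨n, hN, ?_⟩
  rw [mul_div_assoc', lt_div_iff₀ (by positivity)]
  calc C * (n ! : ℝ) ^ 2 < ((⌈C⌉₊ + 1 : ℕ) : ℝ) * (n ! : ℝ) ^ 2 := by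
        gcongr
        push_cast
        linarith [Nat.le_ceil C]
    _ ≤ _ := by exact_mod_cast hn
end

section
/- For all n ≥ 1 and k ≥ 1, the probability that a uniformly random permutation of [n] has exactly k cycles is at most (1/n) · h_n^{k-1} / (k-1)!, where h_n = 1 + 1/2 + ... + 1/n. -/
/-!
Removing `0` from its cycle (`Equiv.Perm.decomposeFin`) turns a permutation `σ` of `Fin (n + 1)`
into the pair `(σ 0, e)` with `e` a permutation of `Fin n`; `σ` has one cycle more than `e` if
`σ 0 = 0`, and as many otherwise, `0` being then inserted into an existing cycle. Hence the number
of permutations of `[n]` with `k` cycles is the Stirling number `c(n, k)` of the first kind, and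
`c(n + 1, k + 1) * k! ≤ n! * h_n ^ k` by induction on `n`: Stirling's recurrence reduces the step
to `h ^ (k + 1) + (k + 1) * h ^ k / (n + 1) ≤ (h + 1 / (n + 1)) ^ (k + 1)`, the first two terms of
the binomial expansion. Finally `h_(n-1) ≤ h_n`.
-/

def cycleCount {n : ℕ} (π : Equiv.Perm (Fin n)) : ℕ :=
  π.cycleType.card + (n - π.cycleType.sum)

open Equiv Equiv.Perm Finset
open scoped Nat

namespace Equiv.Perm

variable {α : Type*} {f : Perm α}

theorem SameCycle.rel_of_forall_rel_apply [Finite α] {r : α → α → Prop} (hr : Equivalence r)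
    (hf : ∀ x, r x (f x)) {x y : α} (h : f.SameCycle x y) : r x y := by
  obtain ⟨i, rfl⟩ := h.exists_nat_pow_eq
  induction i with
  | zero => exact hr.refl x
  | succ i ih =>
    rw [pow_succ', mul_apply]
    exact hr.trans (ih (sameCycle_pow_right.2 .rfl)) (hf _)

variable [Fintype α] [DecidableEq α]

noncomputable def quotientSameCycleEquiv (f : Perm α) :
    Quotient (SameCycle.setoid f) ≃ f.cycleFactorsFinset ⊕ (f.supportᶜ : Finset α) := by
  let F : α → f.cycleFactorsFinset ⊕ (f.supportᶜ : Finset α) := fun x =>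
    if hx : f x = x then Sum.inr ⟨x, by simpa⟩
    else Sum.inl ⟨f.cycleOf x, cycleOf_mem_cycleFactorsFinset_iff.2 (mem_support.2 hx)⟩
  have hF : ∀ x y, f.SameCycle x y ↔ F x = F y := by
    intro x y
    by_cases hx : f x = x <;> by_cases hy : f y = y
    · simp only [F, hx, hy, dite_true, Sum.inr.injEq, Subtype.mk.injEq]
      exact ⟨fun h => h.eq_of_left hx, fun h => h ▸ .rfl⟩
    · simpa [F, hx, hy] using fun h : f.SameCycle x y => hy (h.apply_eq_self_iff.1 hx)
    · simpa [F, hx, hy] using fun h : f.SameCycle x y => hx (h.apply_eq_self_iff.2 hy)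
    · simp [F, hx, hy, sameCycle_iff_cycleOf_eq_of_mem_support (mem_support.2 hx)
        (mem_support.2 hy)]
  refine Equiv.ofBijective (Quotient.lift F fun x y h => (hF x y).1 h) ⟨?_, ?_⟩
  · rintro ⟨x⟩ ⟨y⟩ hxy
    exact Quotient.sound ((hF x y).2 hxy)
  · rintro (⟨c, hc⟩ | ⟨x, hx⟩)
    · obtain ⟨x, hx⟩ := (mem_cycleFactorsFinset_iff.1 hc).1.nonempty_support
      refine ⟨⟦x⟧, ?_⟩
      simp [F, mem_support.1 (mem_cycleFactorsFinset_support_le hc hx), cycle_is_cycleOf hx hc]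
    · exact ⟨⟦x⟧, by simp [F, notMem_support.1 (mem_compl.1 hx)]⟩

theorem card_quotient_sameCycle (f : Perm α) :
    Nat.card (Quotient (SameCycle.setoid f)) =
      f.cycleType.card + (Fintype.card α - #f.support) := by
  rw [Nat.card_congr (quotientSameCycleEquiv f), Nat.card_sum, Nat.card_eq_fintype_card,
    Nat.card_eq_fintype_card, Fintype.card_coe, Fintype.card_coe, card_compl, cycleType_def,
    Multiset.card_map]
  rfl

section decomposeFin

variable {n : ℕ} (p : Fin (n + 1)) (e : Perm (Fin n))

local notation "σ" => decomposeFin.symm (p, e)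

/-- The `σ`-orbit of `z` as an `e`-orbit: `0` joins the orbit of `p`, or forms the extra orbit
`none` when `p = 0`. -/
def decomposeFinOrbit : Fin (n + 1) → Option (Quotient (SameCycle.setoid e)) :=
  Fin.cases (Fin.cases none (fun q => some ⟦q⟧) p) (fun x => some ⟦x⟧)

@[simp]
theorem decomposeFinOrbit_succ (x : Fin n) : decomposeFinOrbit p e x.succ = some ⟦x⟧ :=
  rfl

theorem decomposeFinOrbit_self : decomposeFinOrbit p e p = decomposeFinOrbit p e 0 := by
  cases p using Fin.cases <;> rfl

theorem decomposeFinOrbit_eq_none_iff {z : Fin (n + 1)} :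
    decomposeFinOrbit p e z = none ↔ z = 0 ∧ p = 0 := by
  cases z using Fin.cases <;> cases p using Fin.cases <;> simp [decomposeFinOrbit]

theorem sameCycle_decomposeFin_symm_succ_apply (x : Fin n) : SameCycle σ x.succ (e x).succ := by
  have hσ := decomposeFin_symm_apply_succ e p x
  by_cases hp : (e x).succ = p
  · rw [hp, swap_apply_right] at hσ
    have : (e x).succ = σ (σ x.succ) := by rw [hσ, decomposeFin_symm_apply_zero, hp]
    rw [this, sameCycle_apply_right, sameCycle_apply_right]
  · rw [swap_apply_of_ne_of_ne (Fin.succ_ne_zero _) hp] at hσ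
    rw [← hσ, sameCycle_apply_right]

theorem SameCycle.decomposeFin_symm_succ {x y : Fin n} (h : e.SameCycle x y) :
    SameCycle σ x.succ y.succ :=
  h.rel_of_forall_rel_apply ((SameCycle.equivalence _).comap Fin.succ)
    (sameCycle_decomposeFin_symm_succ_apply p e)

theorem decomposeFinOrbit_decomposeFin_symm_apply (z : Fin (n + 1)) :
    decomposeFinOrbit p e (σ z) = decomposeFinOrbit p e z := by
  cases z using Fin.cases with
  | zero => rw [decomposeFin_symm_apply_zero, decomposeFinOrbit_self]
  | succ x =>
    have : decomposeFinOrbit p e (σ x.succ) = decomposeFinOrbit p e (e x).succ := by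
      rw [decomposeFin_symm_apply_succ]
      by_cases hp : (e x).succ = p
      · rw [hp, swap_apply_right, decomposeFinOrbit_self]
      · rw [swap_apply_of_ne_of_ne (Fin.succ_ne_zero _) hp]
    rw [this, decomposeFinOrbit_succ, decomposeFinOrbit_succ]
    exact congrArg some (Quotient.sound (sameCycle_apply_left.2 .rfl))

theorem sameCycle_succ_of_decomposeFinOrbit_eq {z : Fin (n + 1)} {x : Fin n}
    (h : decomposeFinOrbit p e z = some ⟦x⟧) : SameCycle σ z x.succ := by
  cases z using Fin.cases with
  | succ y => exact (Quotient.exact (Option.some_inj.1 h)).decomposeFin_symm_succ p e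
  | zero =>
    cases p using Fin.cases with
    | zero => cases h
    | succ q =>
      have hq : e.SameCycle q x := Quotient.exact (Option.some_inj.1 h)
      refine SameCycle.trans ⟨1, ?_⟩ (hq.decomposeFin_symm_succ _ _)
      rw [zpow_one, decomposeFin_symm_apply_zero]

theorem sameCycle_decomposeFin_symm_iff {z w : Fin (n + 1)} :
    SameCycle σ z w ↔ decomposeFinOrbit p e z = decomposeFinOrbit p e w := by
  refine ⟨fun h => h.rel_of_forall_rel_apply (Equivalence.comap eq_equivalence _)
    fun z => (decomposeFinOrbit_decomposeFin_symm_apply p e z).symm, fun h => ?_⟩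
  rcases hz : decomposeFinOrbit p e z with _ | c
  · rw [hz, eq_comm, decomposeFinOrbit_eq_none_iff] at h
    rw [decomposeFinOrbit_eq_none_iff] at hz
    rw [hz.1, h.1]
  · obtain ⟨x, rfl⟩ := Quotient.exists_rep c
    rw [hz, eq_comm] at h
    exact (sameCycle_succ_of_decomposeFinOrbit_eq p e hz).trans
      (sameCycle_succ_of_decomposeFinOrbit_eq p e h).symm

theorem card_quotient_sameCycle_decomposeFin_symm :
    Nat.card (Quotient (SameCycle.setoid σ)) =
      Nat.card (Quotient (SameCycle.setoid e)) + if p = 0 then 1 else 0 := by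
  have hker : SameCycle.setoid σ = Setoid.ker (decomposeFinOrbit p e) :=
    Setoid.ext fun _ _ => sameCycle_decomposeFin_symm_iff p e
  rw [hker, Nat.card_congr (Setoid.quotientKerEquivRange _)]
  split_ifs with hp
  · have : Function.Surjective (decomposeFinOrbit p e) := by
      rintro (_ | c)
      · exact ⟨0, (decomposeFinOrbit_eq_none_iff p e).2 ⟨rfl, hp⟩⟩
      · obtain ⟨x, rfl⟩ := Quotient.exists_rep c
        exact ⟨x.succ, rfl⟩
    rw [Set.range_eq_univ.2 this, Nat.card_univ, Finite.card_option]
  · have : Set.range (decomposeFinOrbit p e) = Set.range some := by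
      ext c
      constructor
      · rintro ⟨z, rfl⟩
        exact Option.ne_none_iff_exists.1 fun h => hp ((decomposeFinOrbit_eq_none_iff p e).1 h).2
      · rintro ⟨c, rfl⟩
        obtain ⟨x, rfl⟩ := Quotient.exists_rep c
        exact ⟨x.succ, rfl⟩
    rw [this, Nat.card_range_of_injective (Option.some_injective _), add_zero]

end decomposeFin

end Equiv.Perm

theorem cycleCount_eq_card_quotient {n : ℕ} (π : Perm (Fin n)) :
    cycleCount π = Nat.card (Quotient (SameCycle.setoid π)) := by
  rw [cycleCount, sum_cycleType, card_quotient_sameCycle, Fintype.card_fin]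

theorem cycleCount_decomposeFin_symm {n : ℕ} (p : Fin (n + 1)) (e : Perm (Fin n)) :
    cycleCount (decomposeFin.symm (p, e)) = cycleCount e + if p = 0 then 1 else 0 := by
  rw [cycleCount_eq_card_quotient, cycleCount_eq_card_quotient,
    card_quotient_sameCycle_decomposeFin_symm]

theorem card_filter_cycleCount_eq_stirlingFirst (n k : ℕ) :
    #{π : Perm (Fin n) | cycleCount π = k} = Nat.stirlingFirst n k := by
  induction n generalizing k with
  | zero => cases k <;> simp [cycleCount, filter_true_of_mem, filter_false_of_mem]
  | succ n ih =>
    have hsplit : #{π : Perm (Fin (n + 1)) | cycleCount π = k} =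
        #{e : Perm (Fin n) | cycleCount e + 1 = k} +
          n * #{e : Perm (Fin n) | cycleCount e = k} := by
      rw [card_equiv decomposeFin (t := {pe | cycleCount (decomposeFin.symm pe) = k}) (by simp),
        card_filter, Fintype.sum_prod_type, Fin.sum_univ_succ]
      simp only [cycleCount_decomposeFin_symm, Fin.succ_ne_zero, if_true, if_false, add_zero,
        ← card_filter, sum_const, card_univ, Fintype.card_fin, smul_eq_mul]
    rw [hsplit, ih]
    cases k with
    | zero => cases n <;> simp
    | succ j => simp [ih, Nat.stirlingFirst_succ_succ, add_comm]

theorem pow_succ_add_mul_le_add_pow {R : Type*} [CommSemiring R] [PartialOrder R]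
    [IsOrderedRing R] {a x : R} (ha : 0 ≤ a) (hx : 0 ≤ x) (m : ℕ) :
    a ^ (m + 1) + (m + 1) * x * a ^ m ≤ (a + x) ^ (m + 1) := by
  induction m with
  | zero => simp
  | succ m ih =>
    calc a ^ (m + 1 + 1) + ((m + 1 : ℕ) + 1) * x * a ^ (m + 1)
        ≤ a ^ (m + 1 + 1) + ((m + 1 : ℕ) + 1) * x * a ^ (m + 1) + (m + 1) * x ^ 2 * a ^ m :=
          le_add_of_nonneg_right <| mul_nonneg
            (mul_nonneg (add_nonneg m.cast_nonneg zero_le_one) (pow_nonneg hx 2)) (pow_nonneg ha m)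
      _ = (a ^ (m + 1) + (m + 1) * x * a ^ m) * (a + x) := by push_cast; ring
      _ ≤ (a + x) ^ (m + 1) * (a + x) := mul_le_mul_of_nonneg_right ih (add_nonneg ha hx)
      _ = (a + x) ^ (m + 1 + 1) := (pow_succ _ _).symm

theorem harmonic_nonneg (n : ℕ) : 0 ≤ harmonic n := by
  unfold harmonic
  positivity

theorem stirlingFirst_mul_factorial_le_harmonic_pow (n k : ℕ) :
    (Nat.stirlingFirst (n + 1) (k + 1) * k ! : ℚ) ≤ n ! * harmonic n ^ k := by
  induction n generalizing k with
  | zero => cases k <;> simp [Nat.stirlingFirst]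
  | succ n ih =>
    rw [Nat.stirlingFirst_succ_succ]
    cases k with
    | zero =>
      have := ih 0
      simp only [Nat.stirlingFirst_succ_zero, Nat.factorial_succ] at this ⊢
      push_cast at this ⊢
      nlinarith
    | succ j =>
      have h₁ := ih (j + 1)
      have h₂ := ih j
      calc _ = (n + 1) * (Nat.stirlingFirst (n + 1) (j + 2) * (j + 1)! : ℚ) +
            (j + 1) * (Nat.stirlingFirst (n + 1) (j + 1) * j ! : ℚ) := by
            push_cast [Nat.factorial_succ]; ring
        _ ≤ (n + 1) * (n ! * harmonic n ^ (j + 1)) + (j + 1) * (n ! * harmonic n ^ j) := by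
            gcongr
        _ = (n + 1)! * (harmonic n ^ (j + 1) + (j + 1) * (n + 1 : ℚ)⁻¹ * harmonic n ^ j) := by
            push_cast [Nat.factorial_succ]; field_simp
        _ ≤ (n + 1)! * harmonic (n + 1) ^ (j + 1) := by
            rw [harmonic_succ]
            gcongr
            exact_mod_cast pow_succ_add_mul_le_add_pow (harmonic_nonneg n) (by positivity) j

theorem stirlingFirst_div_factorial_le_harmonic_pow (m j : ℕ) :
    (Nat.stirlingFirst (m + 1) (j + 1) / (m + 1)! : ℚ) ≤
      1 / (m + 1 : ℚ) * harmonic (m + 1) ^ j / j ! := by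
  have hmono : harmonic m ^ j ≤ harmonic (m + 1) ^ j := by
    gcongr
    · exact harmonic_nonneg m
    · rw [harmonic_succ]; exact le_add_of_nonneg_right (by positivity)
  rw [div_le_div_iff₀ (by positivity) (by positivity), Nat.factorial_succ]
  push_cast
  calc (Nat.stirlingFirst (m + 1) (j + 1) * j ! : ℚ) ≤ m ! * harmonic (m + 1) ^ j :=
        (stirlingFirst_mul_factorial_le_harmonic_pow m j).trans (by gcongr)
    _ = 1 / (m + 1 : ℚ) * harmonic (m + 1) ^ j * ((m + 1) * m !) := by field_simp

open scoped Classical in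
/-- For `n, k ≥ 1`, the probability that a uniformly random permutation of `[n]`
has exactly `k` cycles is at most `(1/n) · h_n^{k-1}/(k-1)!`. -/
theorem stmt6 (n k : ℕ) (hn : 1 ≤ n) (hk : 1 ≤ k) :
    ((Finset.univ.filter (fun π : Equiv.Perm (Fin n) => cycleCount π = k)).card : ℝ)
        / Nat.factorial n ≤
      (1 / (n : ℝ)) * (∑ j ∈ Finset.Icc 1 n, (1 : ℝ) / j) ^ (k - 1)
        / Nat.factorial (k - 1) := by
  obtain ⟨m, rfl⟩ := Nat.exists_eq_add_of_le' hn
  obtain ⟨j, rfl⟩ := Nat.exists_eq_add_of_le' hk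
  have hH : ∑ i ∈ Finset.Icc 1 (m + 1), (1 : ℝ) / i = harmonic (m + 1) := by
    rw [harmonic_eq_sum_Icc]
    push_cast
    simp only [one_div]
  rw [card_filter_cycleCount_eq_stirlingFirst, hH, Nat.add_sub_cancel]
  simpa using (Rat.cast_le (K := ℝ)).2 (stirlingFirst_div_factorial_le_harmonic_pow m j)
end

section
/- The probability that a uniformly random permutation of [n] has at least 10 log n cycles is O(n^{-14}). -/
open Equiv Equiv.Perm Finset in
/-- The number of `SameCycle`-orbits of a permutation (cycles including fixed points). -/
noncomputable def orbCount {n : ℕ} (π : Equiv.Perm (Fin n)) : ℕ :=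
  Nat.card (Quotient (Equiv.Perm.SameCycle.setoid π))

section Aux
open Equiv Equiv.Perm Finset
lemma sameCycle_fixed {n : ℕ} {π : Equiv.Perm (Fin n)} {a b : Fin n}
    (hab : π.SameCycle a b) (ha : π a = a) : π b = b := by
  obtain ⟨i, hi⟩ := hab
  rw [← hi, Equiv.Perm.zpow_apply_eq_self_of_apply_eq_self ha i]; exact ha

lemma sameCycle_fixed_eq {n : ℕ} {π : Equiv.Perm (Fin n)} {a b : Fin n}
    (hab : π.SameCycle a b) (ha : π a = a) : a = b := by
  obtain ⟨i, hi⟩ := hab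
  rw [← hi, Equiv.Perm.zpow_apply_eq_self_of_apply_eq_self ha i]

open scoped Classical in
noncomputable def orbMap {n : ℕ} (π : Equiv.Perm (Fin n)) (x : Fin n) :
    {c // c ∈ π.cycleFactorsFinset} ⊕ {x : Fin n // π x = x} :=
  if h : π x = x then Sum.inr ⟨x, h⟩
  else Sum.inl ⟨π.cycleOf x,
    Equiv.Perm.cycleOf_mem_cycleFactorsFinset_iff.2 (Equiv.Perm.mem_support.2 h)⟩

open scoped Classical in
lemma cycleCount_eq_orbCount {n : ℕ} (π : Equiv.Perm (Fin n)) :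
    cycleCount π = orbCount π := by
  classical
  have hwd : ∀ a b : Fin n, π.SameCycle a b → orbMap π a = orbMap π b := by
    intro a b hab
    rcases em (π a = a) with ha | ha
    · have hab' := sameCycle_fixed_eq hab ha
      subst hab'; rfl
    · have hb : ¬ π b = b := fun hb => ha (sameCycle_fixed hab.symm hb)
      simp only [orbMap, dif_neg ha, dif_neg hb]
      exact congrArg _ (Subtype.ext (Equiv.Perm.SameCycle.cycleOf_eq hab))
  set F : Quotient (Equiv.Perm.SameCycle.setoid π) →
      {c // c ∈ π.cycleFactorsFinset} ⊕ {x : Fin n // π x = x} :=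
    Quotient.lift (orbMap π) hwd with hF
  have hbij : Function.Bijective F := by
    constructor
    · rintro ⟨a⟩ ⟨b⟩ hab2
      have hab3 : orbMap π a = orbMap π b := hab2
      apply Quotient.sound
      rcases em (π a = a) with ha | ha <;> rcases em (π b = b) with hb | hb <;>
        simp only [orbMap, dif_pos, dif_neg, ha, hb, Sum.inl.injEq,
          Sum.inr.injEq, Subtype.mk.injEq, reduceCtorEq, dite_false, dite_true] at hab3
      · exact hab3 ▸ Equiv.Perm.SameCycle.refl π a
      · have hbb : b ∈ (π.cycleOf b).support :=
          Equiv.Perm.mem_support_cycleOf_iff.2 ⟨Equiv.Perm.SameCycle.refl π b,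
            Equiv.Perm.mem_support.2 hb⟩
        rw [← hab3] at hbb
        exact (Equiv.Perm.mem_support_cycleOf_iff.1 hbb).1
    · rintro (⟨c, hc⟩ | ⟨x, hx⟩)
      · have hc' := Equiv.Perm.mem_cycleFactorsFinset_iff.1 hc
        obtain ⟨a, ha⟩ := hc'.1.nonempty_support
        refine ⟨⟦a⟧, ?_⟩
        have hπa : ¬ π a = a := by
          rw [← hc'.2 a ha]; exact Equiv.Perm.mem_support.1 ha
        show orbMap π a = _
        simp only [orbMap, dif_neg hπa]
        exact congrArg _ (Subtype.ext (Equiv.Perm.cycle_is_cycleOf ha hc).symm)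
      · exact ⟨⟦x⟧, by show orbMap π x = _; simp [orbMap, dif_pos hx]⟩
  have hcard := Nat.card_eq_of_bijective F hbij
  rw [orbCount, hcard, Nat.card_sum]
  have h1 : Nat.card {c // c ∈ π.cycleFactorsFinset} = π.cycleFactorsFinset.card := by
    simp [Nat.card_eq_fintype_card]
  have h2 : Nat.card {x : Fin n // π x = x} =
      (Finset.univ.filter (fun x : Fin n => π x = x)).card := by
    simp [Nat.card_eq_fintype_card, Fintype.card_subtype]
  rw [h1, h2, cycleCount, Equiv.Perm.sum_cycleType, Equiv.Perm.cycleType_def,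
    Multiset.card_map]
  have h3 := Finset.card_filter_add_card_filter_not
    (s := (Finset.univ : Finset (Fin n))) (p := fun x => π x = x)
  simp only [Finset.card_univ, Fintype.card_fin] at h3
  have h4 : π.support.card = (Finset.univ.filter (fun x : Fin n => ¬ π x = x)).card := by
    simp [Equiv.Perm.support, Ne]
  have h5 : π.cycleFactorsFinset.card = Multiset.card π.cycleFactorsFinset.val := rfl
  omega

lemma sameCycle_apply_self {m : ℕ} (σ : Equiv.Perm (Fin m)) (z : Fin m) :
    σ.SameCycle z (σ z) := ⟨1, by simp⟩
lemma sameCycle_succ_step {n : ℕ} (p : Fin (n + 1)) (e : Equiv.Perm (Fin n)) (x : Fin n) :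
    (Equiv.Perm.decomposeFin.symm (p, e)).SameCycle x.succ ((e x).succ) := by
  set σ := Equiv.Perm.decomposeFin.symm (p, e) with hσ
  have happ : σ x.succ = Equiv.swap 0 p ((e x).succ) := by
    rw [hσ, Equiv.Perm.decomposeFin_symm_apply_succ]
  by_cases h : (e x).succ = p
  · have h1 : σ x.succ = 0 := by rw [happ, h, Equiv.swap_apply_right]
    have h2 : σ 0 = p := by rw [hσ]; exact Equiv.Perm.decomposeFin_symm_apply_zero p e
    have s1 : σ.SameCycle x.succ (0 : Fin (n + 1)) := h1 ▸ sameCycle_apply_self σ x.succ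
    have s2 : σ.SameCycle (0 : Fin (n + 1)) ((e x).succ) := by
      rw [h]; exact h2 ▸ sameCycle_apply_self σ 0
    exact s1.trans s2
  · have h1 : σ x.succ = (e x).succ := by
      rw [happ, Equiv.swap_apply_of_ne_of_ne (Fin.succ_ne_zero _) h]
    exact h1 ▸ sameCycle_apply_self σ x.succ

lemma sameCycle_succ_pow {n : ℕ} (p : Fin (n + 1)) (e : Equiv.Perm (Fin n)) (k : ℕ) (x : Fin n) :
    (Equiv.Perm.decomposeFin.symm (p, e)).SameCycle x.succ (((e ^ k) x).succ) := by
  induction k generalizing x with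
  | zero => simp [Equiv.Perm.SameCycle.refl]
  | succ k ih =>
    have h1 : (e ^ (k + 1)) x = (e ^ k) (e x) := by
      rw [pow_succ]; exact Equiv.Perm.mul_apply _ _ _
    rw [h1]
    exact (sameCycle_succ_step p e x).trans (ih (e x))

lemma sameCycle_succ {n : ℕ} (p : Fin (n + 1)) (e : Equiv.Perm (Fin n)) {x y : Fin n}
    (h : e.SameCycle x y) :
    (Equiv.Perm.decomposeFin.symm (p, e)).SameCycle x.succ y.succ := by
  obtain ⟨i, _, _, hi⟩ := Equiv.Perm.SameCycle.exists_pow_eq e h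
  rw [← hi]
  exact sameCycle_succ_pow p e i x

lemma orbCount_decompose_le {n : ℕ} (p : Fin (n + 1)) (e : Equiv.Perm (Fin n)) :
    orbCount (Equiv.Perm.decomposeFin.symm (p, e)) ≤
      orbCount e + (if p = 0 then 1 else 0) := by
  classical
  set σ := Equiv.Perm.decomposeFin.symm (p, e) with hσ
  have hwd : ∀ a b : Fin n, e.SameCycle a b →
      (⟦a.succ⟧ : Quotient (Equiv.Perm.SameCycle.setoid σ)) = ⟦b.succ⟧ :=
    fun a b hab => Quotient.sound (sameCycle_succ p e hab)
  by_cases hp : p = 0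
  · rw [hp]
    -- surjection from Option (Quotient e)
    set F : Option (Quotient (Equiv.Perm.SameCycle.setoid e)) →
        Quotient (Equiv.Perm.SameCycle.setoid σ) :=
      fun o => o.elim ⟦0⟧ (Quotient.lift (fun x => (⟦x.succ⟧ :
        Quotient (Equiv.Perm.SameCycle.setoid σ))) hwd) with hF
    have hsurj : Function.Surjective F := by
      rintro ⟨z⟩
      refine Fin.cases ?_ ?_ z
      · exact ⟨none, rfl⟩
      · intro x; exact ⟨some ⟦x⟧, rfl⟩
    have h := Nat.card_le_card_of_surjective F hsurj
    have ho : Nat.card (Option (Quotient (Equiv.Perm.SameCycle.setoid e))) =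
        Nat.card (Quotient (Equiv.Perm.SameCycle.setoid e)) + 1 := by
      simp [Nat.card_eq_fintype_card]
    rw [ho] at h
    simpa [orbCount] using h
  · simp only [if_neg hp, add_zero]
    set F : Quotient (Equiv.Perm.SameCycle.setoid e) →
        Quotient (Equiv.Perm.SameCycle.setoid σ) :=
      Quotient.lift (fun x => (⟦x.succ⟧ :
        Quotient (Equiv.Perm.SameCycle.setoid σ))) hwd with hF
    have hsurj : Function.Surjective F := by
      rintro ⟨z⟩
      refine Fin.cases ?_ ?_ z
      · obtain ⟨q, hq⟩ : ∃ q : Fin n, q.succ = p := ⟨p.pred hp, Fin.succ_pred p hp⟩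
        refine ⟨⟦q⟧, ?_⟩
        show (⟦q.succ⟧ : Quotient (Equiv.Perm.SameCycle.setoid σ)) = ⟦0⟧
        apply Quotient.sound
        rw [hq]
        have h2 : σ 0 = p := by rw [hσ]; exact Equiv.Perm.decomposeFin_symm_apply_zero p e
        exact (h2 ▸ sameCycle_apply_self σ 0).symm
      · intro x; exact ⟨⟦x⟧, rfl⟩
    have := Nat.card_le_card_of_surjective F hsurj
    simpa [orbCount] using this

lemma cycleCount_decompose_le {n : ℕ} (p : Fin (n + 1)) (e : Equiv.Perm (Fin n)) :
    cycleCount (Equiv.Perm.decomposeFin.symm (p, e)) ≤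
      cycleCount e + (if p = 0 then 1 else 0) := by
  rw [cycleCount_eq_orbCount, cycleCount_eq_orbCount]
  exact orbCount_decompose_le p e
lemma sum_pow_cycleCount (x : ℝ) (hx : 1 ≤ x) (n : ℕ) :
    ∑ π : Equiv.Perm (Fin n), x ^ cycleCount π ≤ ∏ j ∈ Finset.range n, (x + j) := by
  have hx0 : (0 : ℝ) ≤ x := le_trans zero_le_one hx
  induction n with
  | zero =>
    have h1 : ∀ π : Equiv.Perm (Fin 0), x ^ cycleCount π = 1 := by
      intro π
      have : π = 1 := Subsingleton.elim _ _
      subst this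
      simp [cycleCount, Equiv.Perm.cycleType_one]
    rw [Finset.sum_congr rfl (fun π _ => h1 π), Finset.sum_const, Finset.card_univ]
    simp
  | succ n ih =>
    have key : ∀ pe : Fin (n + 1) × Equiv.Perm (Fin n),
        x ^ cycleCount (Equiv.Perm.decomposeFin.symm pe) ≤
          (if pe.1 = 0 then x else 1) * x ^ cycleCount pe.2 := by
      rintro ⟨p, e⟩
      have h1 : x ^ cycleCount (Equiv.Perm.decomposeFin.symm (p, e)) ≤
          x ^ (cycleCount e + (if p = 0 then 1 else 0)) :=
        pow_le_pow_right₀ hx (cycleCount_decompose_le p e)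
      refine h1.trans_eq ?_
      by_cases hp : p = 0 <;> simp [hp, pow_add, pow_succ, mul_comm]
    calc ∑ π : Equiv.Perm (Fin (n + 1)), x ^ cycleCount π
        = ∑ pe : Fin (n + 1) × Equiv.Perm (Fin n),
            x ^ cycleCount (Equiv.Perm.decomposeFin.symm pe) := by
          rw [Finset.univ_perm_fin_succ, Finset.sum_map]
          rfl
      _ ≤ ∑ pe : Fin (n + 1) × Equiv.Perm (Fin n),
            (if pe.1 = 0 then x else 1) * x ^ cycleCount pe.2 :=
          Finset.sum_le_sum (fun pe _ => key pe)
      _ = (∑ p : Fin (n + 1), if p = 0 then x else 1) *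
            (∑ e : Equiv.Perm (Fin n), x ^ cycleCount e) := by
          rw [Finset.sum_mul_sum]
          rw [Fintype.sum_prod_type]
      _ = (x + n) * (∑ e : Equiv.Perm (Fin n), x ^ cycleCount e) := by
          congr 1
          have : ∀ p : Fin (n + 1), (if p = 0 then x else 1) =
              (if p = 0 then x - 1 else 0) + 1 := by
            intro p; by_cases hp : p = 0 <;> simp [hp]
          rw [Finset.sum_congr rfl (fun p _ => this p), Finset.sum_add_distrib,
            Finset.sum_ite_eq' Finset.univ (0 : Fin (n + 1)) (fun _ => x - 1)]
          simp

      _ ≤ (x + n) * ∏ j ∈ Finset.range n, (x + j) := by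
          apply mul_le_mul_of_nonneg_left ih
          positivity
      _ = ∏ j ∈ Finset.range (n + 1), (x + j) := by
          rw [Finset.prod_range_succ]
          ring

end Aux

open scoped Classical in
lemma fact_add_le (k n : ℕ) : (n + k).factorial ≤ (n + k) ^ k * n.factorial := by
  induction k with
  | zero => simp
  | succ k ih =>
    have h1 : (n + (k + 1)).factorial = (n + k + 1) * (n + k).factorial := by
      rw [show n + (k + 1) = (n + k) + 1 by ring, Nat.factorial_succ]
    rw [h1]
    calc (n + k + 1) * (n + k).factorial ≤ (n + k + 1) * ((n + k) ^ k * n.factorial) :=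
          Nat.mul_le_mul_left _ ih
      _ ≤ (n + k + 1) * ((n + k + 1) ^ k * n.factorial) := by
          apply Nat.mul_le_mul_left
          exact Nat.mul_le_mul_right _ (Nat.pow_le_pow_left (Nat.le_succ _) k)
      _ = (n + (k + 1)) ^ (k + 1) * n.factorial := by ring_nf
      
lemma prod_ten_le (n : ℕ) (hn : 1 ≤ n) :
    (∏ j ∈ Finset.range n, (10 + j)) ≤ 10 ^ 9 * n ^ 9 * n.factorial := by
  have key : ∀ m : ℕ, 9 * 8 * 7 * 6 * 5 * 4 * 3 * 2 * (∏ j ∈ Finset.range m, (10 + j)) * 1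
      = (m + 9).factorial := by
    intro m
    induction m with
    | zero => simp [Nat.factorial]
    | succ m ih =>
      rw [Finset.prod_range_succ, show m + 1 + 9 = (m + 9) + 1 by ring, Nat.factorial_succ, ← ih]
      ring
  have key := key n
  have h1 : (∏ j ∈ Finset.range n, (10 + j)) ≤ (n + 9).factorial := by
    rw [← key]; nlinarith [Nat.zero_le (∏ j ∈ Finset.range n, (10 + j))]
  have h2 : (n + 9).factorial ≤ (n + 9) ^ 9 * n.factorial := fact_add_le 9 n
  have h3 : (n + 9) ^ 9 ≤ (10 * n) ^ 9 := Nat.pow_le_pow_left (by omega) 9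
  calc (∏ j ∈ Finset.range n, (10 + j)) ≤ (n + 9) ^ 9 * n.factorial := le_trans h1 h2
    _ ≤ (10 * n) ^ 9 * n.factorial := Nat.mul_le_mul_right _ h3
    _ = 10 ^ 9 * n ^ 9 * n.factorial := by ring

lemma log_ten : (23 : ℝ) ≤ 10 * Real.log 10 := by
  have h1 : Real.exp 23 ≤ 10 ^ 10 := by
    have : Real.exp 23 = Real.exp 1 ^ 23 := by
      rw [← Real.exp_nat_mul]; norm_num
    rw [this]
    calc Real.exp 1 ^ 23 ≤ 2.7182818286 ^ 23 :=
          pow_le_pow_left₀ (Real.exp_pos 1).le Real.exp_one_lt_d9.le 23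
      _ ≤ 10 ^ 10 := by norm_num
  have h2 : Real.log (Real.exp 23) ≤ Real.log (10 ^ 10) :=
    Real.log_le_log (Real.exp_pos _) h1
  rw [Real.log_exp, Real.log_pow] at h2
  push_cast at h2
  linarith


open scoped Classical in
/-- The probability that a uniformly random permutation of `[n]` has at least
`10 log n` cycles is `O(n^{-14})`. -/
theorem stmt15 : ∃ C > 0, ∀ n : ℕ, 1 ≤ n →
    ((Finset.univ.filter (fun π : Equiv.Perm (Fin n) =>
        10 * Real.log n ≤ (cycleCount π : ℝ))).card : ℝ) / Nat.factorial n ≤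
      C * (n : ℝ) ^ (-14 : ℝ) := by
  refine ⟨10 ^ 9, by norm_num, fun n hn => ?_⟩
  have hn0 : (0 : ℝ) < n := by exact_mod_cast hn
  have hn1 : (1 : ℝ) ≤ n := by exact_mod_cast hn
  set S := Finset.univ.filter (fun π : Equiv.Perm (Fin n) =>
    10 * Real.log n ≤ (cycleCount π : ℝ)) with hS
  set P : ℝ := (10 : ℝ) ^ (10 * Real.log n : ℝ) with hP
  have hPpos : 0 < P := Real.rpow_pos_of_pos (by norm_num) _
  -- Markov
  have markov : (S.card : ℝ) * P ≤ ∑ π : Equiv.Perm (Fin n), (10 : ℝ) ^ cycleCount π := by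
    have h1 : ∀ π ∈ S, P ≤ (10 : ℝ) ^ cycleCount π := by
      intro π hπ
      have hπ' : 10 * Real.log n ≤ (cycleCount π : ℝ) := (Finset.mem_filter.1 hπ).2
      calc P ≤ (10 : ℝ) ^ ((cycleCount π : ℝ)) :=
            Real.rpow_le_rpow_of_exponent_le (by norm_num) hπ'
        _ = (10 : ℝ) ^ cycleCount π := Real.rpow_natCast 10 _
    calc (S.card : ℝ) * P = ∑ _π ∈ S, P := by rw [Finset.sum_const, nsmul_eq_mul]
      _ ≤ ∑ π ∈ S, (10 : ℝ) ^ cycleCount π := Finset.sum_le_sum h1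
      _ ≤ ∑ π : Equiv.Perm (Fin n), (10 : ℝ) ^ cycleCount π :=
          Finset.sum_le_sum_of_subset_of_nonneg (Finset.subset_univ S)
            (fun i _ _ => by positivity)
  have hsum : ∑ π : Equiv.Perm (Fin n), (10 : ℝ) ^ cycleCount π ≤
      10 ^ 9 * (n : ℝ) ^ (9 : ℕ) * (Nat.factorial n : ℝ) := by
    calc ∑ π : Equiv.Perm (Fin n), (10 : ℝ) ^ cycleCount π
        ≤ ∏ j ∈ Finset.range n, ((10 : ℝ) + j) := sum_pow_cycleCount 10 (by norm_num) n
      _ = ((∏ j ∈ Finset.range n, (10 + j) : ℕ) : ℝ) := by push_cast; ring_nf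
      _ ≤ ((10 ^ 9 * n ^ 9 * n.factorial : ℕ) : ℝ) := by
          exact_mod_cast Nat.cast_le.2 (prod_ten_le n hn)
      _ = 10 ^ 9 * (n : ℝ) ^ (9 : ℕ) * (Nat.factorial n : ℝ) := by push_cast; ring
  -- rewrite P as a power of n
  have hPn : P = (n : ℝ) ^ (10 * Real.log 10 : ℝ) := by
    rw [hP, Real.rpow_def_of_pos (by norm_num : (0:ℝ) < 10),
      Real.rpow_def_of_pos hn0]
    congr 1
    ring
  have hfac : (0 : ℝ) < (Nat.factorial n : ℝ) := by
    exact_mod_cast Nat.factorial_pos n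
  rw [div_le_iff₀ hfac]
  have final : (S.card : ℝ) ≤ 10 ^ 9 * (n : ℝ) ^ (-14 : ℝ) * (Nat.factorial n : ℝ) := by
    have h4 : (S.card : ℝ) * P ≤ 10 ^ 9 * (n : ℝ) ^ (9 : ℕ) * (Nat.factorial n : ℝ) :=
      le_trans markov hsum
    have h5 : (S.card : ℝ) ≤ 10 ^ 9 * (n : ℝ) ^ (9 : ℕ) * (Nat.factorial n : ℝ) / P :=
      (le_div_iff₀ hPpos).2 h4
    refine h5.trans ?_
    have hexp : (n : ℝ) ^ ((9 : ℕ) : ℝ) / P ≤ (n : ℝ) ^ (-14 : ℝ) := by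
      rw [hPn, ← Real.rpow_sub hn0]
      refine Real.rpow_le_rpow_of_exponent_le hn1 ?_
      have := log_ten
      push_cast
      linarith
    have h6 : (n : ℝ) ^ (9 : ℕ) = (n : ℝ) ^ ((9 : ℕ) : ℝ) := (Real.rpow_natCast n 9).symm
    calc 10 ^ 9 * (n : ℝ) ^ (9 : ℕ) * (Nat.factorial n : ℝ) / P
        = 10 ^ 9 * ((n : ℝ) ^ ((9 : ℕ) : ℝ) / P) * (Nat.factorial n : ℝ) := by
          rw [h6]; ring
      _ ≤ 10 ^ 9 * (n : ℝ) ^ (-14 : ℝ) * (Nat.factorial n : ℝ) := by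
          have h7 : (0:ℝ) ≤ (Nat.factorial n : ℝ) := hfac.le
          have h8 : (0:ℝ) ≤ (10:ℝ) ^ 9 := by norm_num
          nlinarith [hexp, Real.rpow_nonneg hn0.le (-14 : ℝ),
            div_nonneg (Real.rpow_nonneg hn0.le ((9:ℕ):ℝ)) hPpos.le]
  exact final
end
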